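/- arXiv:2103.04220 — 4 statements merged into one kernel-verified Lean document; each statement's English description precedes it below -/
import Mathlib

section
/- Let U(φ) = (I_p + X_φ)(I_p - X_φ)⁻¹ I_{p×r} denote the Cayley parameterization, where X_φ is the skew-symmetric block matrix built from A ∈ ℝ^{(p-r)×r} with φ = vec(A), and I_{p×r} is the first r columns of I_p. Then for all φ, φ₀, the Frobenius norm bound ‖U(φ) - U(φ₀)‖_F ≤ 2√2 ‖φ - φ₀‖₂ holds. -/
open Matrix

/-- Frobenius norm of a real matrix. -/
noncomputable def frobNorm {m n : Type*} [Fintype m] [Fintype n] (A : Matrix m n ℝ) : ℝ :=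
  Real.sqrt (∑ i, ∑ j, (A i j) ^ 2)

/-- The skew-symmetric block matrix `X_φ = [[0, -Aᵀ],[A, 0]]` built from `A`. -/
noncomputable def Xmat {n1 n2 : Type*} (A : Matrix n2 n1 ℝ) :
    Matrix (n1 ⊕ n2) (n1 ⊕ n2) ℝ :=
  Matrix.fromBlocks 0 (-Aᵀ) A 0

/-- The matrix `I_{p×r}` consisting of the first `r` columns of the identity. -/
noncomputable def IprM (n1 n2 : Type*) [DecidableEq n1] : Matrix (n1 ⊕ n2) n1 ℝ :=
  Matrix.of (Sum.elim (fun i j => if i = j then (1 : ℝ) else 0) (fun _ _ => 0))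

/-- The Cayley parameterization `U(φ) = (I + X_φ)(I - X_φ)⁻¹ I_{p×r}`. -/
noncomputable def CayleyU {n1 n2 : Type*} [Fintype n1] [Fintype n2]
    [DecidableEq n1] [DecidableEq n2] (A : Matrix n2 n1 ℝ) : Matrix (n1 ⊕ n2) n1 ℝ :=
  (1 + Xmat A) * (1 - Xmat A)⁻¹ * IprM n1 n2

section Aux

variable {p : Type*} [Fintype p] [DecidableEq p]

/-- squared euclidean norm of a vector -/
noncomputable def sqnorm {p : Type*} [Fintype p] (v : p → ℝ) : ℝ := ∑ i, (v i) ^ 2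

lemma sqnorm_nonneg {p : Type*} [Fintype p] (v : p → ℝ) : 0 ≤ sqnorm v :=
  Finset.sum_nonneg fun i _ => sq_nonneg _

lemma skew_dot {X : Matrix p p ℝ} (hX : Xᵀ = -X) (v : p → ℝ) :
    v ⬝ᵥ X.mulVec v = 0 := by
  have h1 : v ⬝ᵥ X.mulVec v = -(v ⬝ᵥ X.mulVec v) := by
    calc v ⬝ᵥ X.mulVec v = Xᵀ.mulVec v ⬝ᵥ v := by
          rw [Matrix.dotProduct_mulVec, ← Matrix.mulVec_transpose]
      _ = -(X.mulVec v ⬝ᵥ v) := by rw [hX, Matrix.neg_mulVec, neg_dotProduct]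
      _ = -(v ⬝ᵥ X.mulVec v) := by rw [dotProduct_comm]
  linarith

lemma sqnorm_eq_dot {p : Type*} [Fintype p] (v : p → ℝ) : sqnorm v = v ⬝ᵥ v := by
  simp [sqnorm, dotProduct, sq]

lemma skew_expand {X : Matrix p p ℝ} (hX : Xᵀ = -X) (v : p → ℝ) :
    sqnorm ((1 - X).mulVec v) = sqnorm v + sqnorm (X.mulVec v) := by
  have h0 : (1 - X).mulVec v = v - X.mulVec v := by
    rw [Matrix.sub_mulVec, Matrix.one_mulVec]
  rw [h0, sqnorm_eq_dot, sqnorm_eq_dot, sqnorm_eq_dot]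
  have h1 := skew_dot hX v
  have h2 : X.mulVec v ⬝ᵥ v = 0 := by
    rw [dotProduct_comm]; exact h1
  simp [sub_dotProduct, dotProduct_sub, h1, h2]

lemma skew_isUnit {X : Matrix p p ℝ} (hX : Xᵀ = -X) : IsUnit (1 - X) := by
  rw [← Matrix.mulVec_injective_iff_isUnit]
  intro v w h
  have hvw : (1 - X).mulVec (v - w) = 0 := by
    rw [Matrix.mulVec_sub, h, sub_self]
  have h1 : sqnorm (v - w) = 0 := by
    have := skew_expand hX (v - w)
    rw [hvw] at this
    have h2 : sqnorm (0 : p → ℝ) = 0 := by simp [sqnorm]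
    have h3 := sqnorm_nonneg (v - w)
    have h4 := sqnorm_nonneg (X.mulVec (v - w))
    -- this : 0 = sqnorm (v-w) + sqnorm (X (v-w))  (after rewriting sqnorm 0)
    rw [h2] at this
    linarith
  have h5 : v - w = 0 := by
    by_contra hne
    obtain ⟨i, hi⟩ := Function.ne_iff.mp hne
    have : (0:ℝ) < sqnorm (v - w) := by
      have hne' : (v - w) i ≠ 0 := hi
      have hpos : (0:ℝ) < ((v - w) i)^2 := by positivity
      calc (0:ℝ) < ((v-w) i)^2 := hpos
        _ ≤ sqnorm (v - w) := Finset.single_le_sum (f := fun j => ((v-w) j)^2)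
            (fun j _ => sq_nonneg _) (Finset.mem_univ i)
    linarith
  exact sub_eq_zero.mp h5

lemma skew_inv_contract {X : Matrix p p ℝ} (hX : Xᵀ = -X) (v : p → ℝ) :
    sqnorm ((1 - X)⁻¹.mulVec v) ≤ sqnorm v := by
  have hu : IsUnit (1 - X).det := (Matrix.isUnit_iff_isUnit_det _).mp (skew_isUnit hX)
  set w := (1 - X)⁻¹.mulVec v with hw
  have h1 : (1 - X).mulVec w = v := by
    rw [hw, Matrix.mulVec_mulVec, Matrix.mul_nonsing_inv _ hu, Matrix.one_mulVec]
  have := skew_expand hX w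
  rw [h1] at this
  have := sqnorm_nonneg (X.mulVec w)
  linarith [skew_expand hX w]

end Aux

section Frob

lemma frobSq_mul_left_le {p m : Type*} [Fintype p] [Fintype m] {C : Matrix p p ℝ}
    (hC : ∀ v, sqnorm (C.mulVec v) ≤ sqnorm v) (M : Matrix p m ℝ) :
    ∑ i, ∑ j, ((C * M) i j)^2 ≤ ∑ i, ∑ j, (M i j)^2 := by
  have h1 : ∑ i, ∑ j, ((C*M) i j)^2 = ∑ j, ∑ i, ((C*M) i j)^2 := Finset.sum_comm
  have h2 : ∑ i, ∑ j, (M i j)^2 = ∑ j, ∑ i, (M i j)^2 := Finset.sum_comm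
  rw [h1, h2]
  apply Finset.sum_le_sum
  intro j _
  have := hC (fun k => M k j)
  simpa [sqnorm, Matrix.mulVec, Matrix.mul_apply, dotProduct] using this

lemma frobSq_mul_right_le {q p m : Type*} [Fintype q] [Fintype p] [Fintype m]
    {N : Matrix p m ℝ} (hN : ∀ v, sqnorm (Nᵀ.mulVec v) ≤ sqnorm v) (M : Matrix q p ℝ) :
    ∑ i, ∑ j, ((M * N) i j)^2 ≤ ∑ i, ∑ j, (M i j)^2 := by
  apply Finset.sum_le_sum
  intro i _
  have := hN (fun k => M i k)
  simpa [sqnorm, Matrix.mulVec, Matrix.mul_apply, Matrix.transpose_apply,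
    dotProduct, mul_comm] using this

end Frob

section XmatFacts

variable {n1 n2 : Type*} [Fintype n1] [Fintype n2] [DecidableEq n1] [DecidableEq n2]

lemma Xmat_transpose (A : Matrix n2 n1 ℝ) : (Xmat A)ᵀ = -(Xmat A) := by
  simp [Xmat, Matrix.fromBlocks_transpose, Matrix.fromBlocks_neg]

lemma Xmat_sub (A B : Matrix n2 n1 ℝ) : Xmat A - Xmat B = Xmat (A - B) := by
  ext i j
  cases i <;> cases j <;> simp [Xmat, Matrix.fromBlocks] <;> ring

lemma frobSq_Xmat (B : Matrix n2 n1 ℝ) :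
    ∑ i, ∑ j, ((Xmat B) i j)^2 = 2 * ∑ i, ∑ j, (B i j)^2 := by
  rw [Fintype.sum_sum_type]
  have e1 : ∀ i : n1, ∑ j, ((Xmat B) (Sum.inl i) j)^2 = ∑ j : n2, (B j i)^2 := by
    intro i
    rw [Fintype.sum_sum_type]
    simp [Xmat, Matrix.fromBlocks]
  have e2 : ∀ i : n2, ∑ j, ((Xmat B) (Sum.inr i) j)^2 = ∑ j : n1, (B i j)^2 := by
    intro i
    rw [Fintype.sum_sum_type]
    simp [Xmat, Matrix.fromBlocks]
  rw [Finset.sum_congr rfl (fun i _ => e1 i), Finset.sum_congr rfl (fun i _ => e2 i)]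
  rw [Finset.sum_comm (f := fun i j => (B j i)^2)]
  ring

lemma IprM_contract (v : (n1 ⊕ n2) → ℝ) :
    sqnorm ((IprM n1 n2)ᵀ.mulVec v) ≤ sqnorm v := by
  have h : ∀ j : n1, (IprM n1 n2)ᵀ.mulVec v j = v (Sum.inl j) := by
    intro j
    simp only [Matrix.mulVec, dotProduct, Matrix.transpose_apply]
    rw [Fintype.sum_sum_type]
    simp [IprM]
  unfold sqnorm
  rw [Finset.sum_congr rfl (fun j _ => by rw [h j])]
  rw [Fintype.sum_sum_type (f := fun i => (v i)^2)]
  have : (0:ℝ) ≤ ∑ i : n2, (v (Sum.inr i))^2 := Finset.sum_nonneg fun _ _ => sq_nonneg _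
  linarith

end XmatFacts

section Identity

variable {p : Type*} [Fintype p] [DecidableEq p]

lemma cayley_diff {X Y : Matrix p p ℝ} (hX : Xᵀ = -X) (hY : Yᵀ = -Y) :
    (1 + X) * (1 - X)⁻¹ - (1 + Y) * (1 - Y)⁻¹
      = (2:ℝ) • ((1 - X)⁻¹ * (X - Y) * (1 - Y)⁻¹) := by
  have hXd : IsUnit (1 - X).det := (Matrix.isUnit_iff_isUnit_det _).mp (skew_isUnit hX)
  have hYd : IsUnit (1 - Y).det := (Matrix.isUnit_iff_isUnit_det _).mp (skew_isUnit hY)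
  have hcomm : (1 + X) * (1 - X)⁻¹ = (1 - X)⁻¹ * (1 + X) := by
    have hc : (1 - X) * (1 + X) = (1 + X) * (1 - X) := by noncomm_ring
    calc (1 + X) * (1 - X)⁻¹
        = (1 - X)⁻¹ * ((1 - X) * ((1 + X) * (1 - X)⁻¹)) := by
          rw [← Matrix.mul_assoc, Matrix.nonsing_inv_mul _ hXd, Matrix.one_mul]
      _ = (1 - X)⁻¹ * ((1 + X) * ((1 - X) * (1 - X)⁻¹)) := by
          rw [← Matrix.mul_assoc (1 - X) (1 + X) (1 - X)⁻¹, hc,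
            Matrix.mul_assoc (1 + X) (1 - X) (1 - X)⁻¹]
      _ = (1 - X)⁻¹ * (1 + X) := by rw [Matrix.mul_nonsing_inv _ hXd, Matrix.mul_one]
  have hmid : (2:ℝ) • (X - Y) = (1 + X) * (1 - Y) - (1 - X) * (1 + Y) := by
    have : (1 + X) * (1 - Y) - (1 - X) * (1 + Y) = X + X - (Y + Y) := by noncomm_ring
    rw [this, two_smul]
    abel
  calc (1 + X) * (1 - X)⁻¹ - (1 + Y) * (1 - Y)⁻¹
      = (1 - X)⁻¹ * (1 + X) - (1 + Y) * (1 - Y)⁻¹ := by rw [hcomm]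
    _ = (1 - X)⁻¹ * ((1 + X) * (1 - Y)) * (1 - Y)⁻¹
        - (1 - X)⁻¹ * ((1 - X) * (1 + Y)) * (1 - Y)⁻¹ := by
        rw [Matrix.mul_assoc ((1:Matrix p p ℝ) - X)⁻¹ ((1 + X) * (1 - Y)) (1 - Y)⁻¹,
          Matrix.mul_assoc (1 + X) (1 - Y) (1 - Y)⁻¹,
          Matrix.mul_nonsing_inv _ hYd, Matrix.mul_one,
          ← Matrix.mul_assoc ((1:Matrix p p ℝ) - X)⁻¹ (1 - X) (1 + Y),
          Matrix.nonsing_inv_mul _ hXd, Matrix.one_mul]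
    _ = (1 - X)⁻¹ * ((1 + X) * (1 - Y) - (1 - X) * (1 + Y)) * (1 - Y)⁻¹ := by
        noncomm_ring
    _ = (1 - X)⁻¹ * ((2:ℝ) • (X - Y)) * (1 - Y)⁻¹ := by rw [hmid]
    _ = (2:ℝ) • ((1 - X)⁻¹ * (X - Y) * (1 - Y)⁻¹) := by
        rw [Matrix.mul_smul, Matrix.smul_mul]

end Identity

lemma frobNorm_smul_two {m n : Type*} [Fintype m] [Fintype n] (M : Matrix m n ℝ) :
    frobNorm ((2:ℝ) • M) = 2 * frobNorm M := by
  unfold frobNorm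
  have h : ∑ i, ∑ j, (((2:ℝ) • M) i j)^2 = 4 * ∑ i, ∑ j, (M i j)^2 := by
    simp only [Matrix.smul_apply, smul_eq_mul, mul_pow, ← Finset.mul_sum]
    norm_num
  rw [h, show (4:ℝ) = 2^2 by norm_num, Real.sqrt_mul (by positivity),
    Real.sqrt_sq (by norm_num)]

lemma frobNorm_le_of_sq_le {m n m' n' : Type*} [Fintype m] [Fintype n] [Fintype m'] [Fintype n']
    {M : Matrix m n ℝ} {M' : Matrix m' n' ℝ}
    (h : ∑ i, ∑ j, (M i j)^2 ≤ ∑ i, ∑ j, (M' i j)^2) : frobNorm M ≤ frobNorm M' :=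
  Real.sqrt_le_sqrt h


/-- `‖U(φ) - U(φ₀)‖_F ≤ 2√2 ‖φ - φ₀‖₂`, where `φ = vec(A)` so that
`‖φ - φ₀‖₂ = ‖A - A₀‖_F`. -/
theorem cayley_global_lipschitz
    {n1 n2 : Type*} [Fintype n1] [Fintype n2] [DecidableEq n1] [DecidableEq n2]
    (A A₀ : Matrix n2 n1 ℝ) :
    frobNorm (CayleyU A - CayleyU A₀) ≤ 2 * Real.sqrt 2 * frobNorm (A - A₀) := by
  set X := Xmat A with hXdef
  set Y := Xmat A₀ with hYdef
  have hX : Xᵀ = -X := Xmat_transpose A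
  have hY : Yᵀ = -Y := Xmat_transpose A₀
  have hnegY : (-Y)ᵀ = -(-Y) := by rw [Matrix.transpose_neg, hY, neg_neg]
  -- the difference identity
  have hdiff : CayleyU A - CayleyU A₀
      = (2:ℝ) • ((1 - X)⁻¹ * ((X - Y) * ((1 - Y)⁻¹ * IprM n1 n2))) := by
    show (1 + X) * (1 - X)⁻¹ * IprM n1 n2 - (1 + Y) * (1 - Y)⁻¹ * IprM n1 n2 = _
    rw [← Matrix.sub_mul, cayley_diff hX hY, Matrix.smul_mul,
      Matrix.mul_assoc ((1:Matrix (n1 ⊕ n2) (n1 ⊕ n2) ℝ) - X)⁻¹ (X - Y) (1 - Y)⁻¹,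
      Matrix.mul_assoc ((1:Matrix (n1 ⊕ n2) (n1 ⊕ n2) ℝ) - X)⁻¹ ((X - Y) * (1 - Y)⁻¹)
        (IprM n1 n2),
      Matrix.mul_assoc (X - Y) ((1:Matrix (n1 ⊕ n2) (n1 ⊕ n2) ℝ) - Y)⁻¹ (IprM n1 n2)]
  rw [hdiff, frobNorm_smul_two]
  -- contraction of N := (1-Y)⁻¹ * IprM on the right
  have hN : ∀ v, sqnorm (((1 - Y)⁻¹ * IprM n1 n2)ᵀ.mulVec v) ≤ sqnorm v := by
    intro v
    rw [Matrix.transpose_mul, ← Matrix.mulVec_mulVec]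
    have h1 : ((1 - Y)⁻¹)ᵀ = (1 - -Y)⁻¹ := by
      rw [Matrix.transpose_nonsing_inv, Matrix.transpose_sub, Matrix.transpose_one, hY,
        sub_neg_eq_add, ← sub_neg_eq_add]
    rw [h1]
    calc sqnorm ((IprM n1 n2)ᵀ.mulVec ((1 - -Y)⁻¹.mulVec v))
        ≤ sqnorm ((1 - -Y)⁻¹.mulVec v) := IprM_contract _
      _ ≤ sqnorm v := skew_inv_contract hnegY v
  have step1 : frobNorm ((1 - X)⁻¹ * ((X - Y) * ((1 - Y)⁻¹ * IprM n1 n2)))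
      ≤ frobNorm ((X - Y) * ((1 - Y)⁻¹ * IprM n1 n2)) :=
    frobNorm_le_of_sq_le (frobSq_mul_left_le (skew_inv_contract hX) _)
  have step2 : frobNorm ((X - Y) * ((1 - Y)⁻¹ * IprM n1 n2)) ≤ frobNorm (X - Y) :=
    frobNorm_le_of_sq_le (frobSq_mul_right_le hN _)
  have step3 : frobNorm (X - Y) = Real.sqrt 2 * frobNorm (A - A₀) := by
    rw [hXdef, hYdef, Xmat_sub]
    unfold frobNorm
    rw [frobSq_Xmat, Real.sqrt_mul (by norm_num)]
  calc 2 * frobNorm ((1 - X)⁻¹ * ((X - Y) * ((1 - Y)⁻¹ * IprM n1 n2)))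
      ≤ 2 * frobNorm ((X - Y) * ((1 - Y)⁻¹ * IprM n1 n2)) := by linarith
    _ ≤ 2 * frobNorm (X - Y) := by linarith
    _ = 2 * Real.sqrt 2 * frobNorm (A - A₀) := by rw [step3]; ring
end

section
/- Let U = [Q₁ᵀ, Q₂ᵀ]ᵀ and U₀ = [Q₀₁ᵀ, Q₀₂ᵀ]ᵀ be p×r matrices with orthonormal columns such that Q₁ and Q₀₁ are symmetric positive definite r×r matrices. Define the inverse Cayley parameterization A(U) = Q₂(I_r + Q₁)⁻¹. Then ‖A(U) - A(U₀)‖_F ≤ 2 ‖U - U₀‖_F. -/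
open Matrix

/-- Vertically stack two matrices `Q1` (top) and `Q2` (bottom). -/
def stackM {n1 n2 κ : Type*} (Q1 : Matrix n1 κ ℝ) (Q2 : Matrix n2 κ ℝ) :
    Matrix (n1 ⊕ n2) κ ℝ :=
  Matrix.of (Sum.elim (fun i j => Q1 i j) (fun i j => Q2 i j))

section Aux

set_option linter.unusedSectionVars false
variable {m n k : Type*} [Fintype m] [Fintype n] [Fintype k] [DecidableEq m] [DecidableEq n] [DecidableEq k]

lemma ct_eq_t (A : Matrix m n ℝ) : Aᴴ = Aᵀ := by
  ext i j; simp [Matrix.conjTranspose_apply]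

lemma frobNorm_nonneg' (A : Matrix m n ℝ) : 0 ≤ frobNorm A := Real.sqrt_nonneg _

lemma frobNorm_sq (A : Matrix m n ℝ) : frobNorm A ^ 2 = ∑ i, ∑ j, (A i j) ^ 2 := by
  rw [frobNorm, Real.sq_sqrt]
  positivity

lemma frobNorm_sq_eq_trace (A : Matrix m n ℝ) : frobNorm A ^ 2 = (Aᵀ * A).trace := by
  rw [frobNorm_sq, Matrix.trace]
  simp only [Matrix.diag_apply, Matrix.mul_apply, Matrix.transpose_apply]
  rw [Finset.sum_comm]
  congr 1; ext i; congr 1; ext j; ring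

lemma frobNorm_sq_eq_trace' (A : Matrix m n ℝ) : frobNorm A ^ 2 = (A * Aᵀ).trace := by
  rw [frobNorm_sq_eq_trace, Matrix.trace_mul_comm]

lemma le_of_sq_le_sq' {a b : ℝ} (hb : 0 ≤ b) (h : a ^ 2 ≤ b ^ 2) (ha : 0 ≤ a) : a ≤ b := by
  nlinarith

lemma psd_trace_nonneg {P : Matrix n n ℝ} (hP : P.PosSemidef) : 0 ≤ P.trace := by
  exact hP.trace_nonneg

lemma psd_t_mul_mul {P : Matrix n n ℝ} (hP : P.PosSemidef) (B : Matrix n m ℝ) :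
    (Bᵀ * P * B).PosSemidef := by
  have := hP.conjTranspose_mul_mul_same B
  rwa [ct_eq_t] at this

lemma psd_t_mul_self (A : Matrix m n ℝ) : (Aᵀ * A).PosSemidef := by
  have := Matrix.posSemidef_conjTranspose_mul_self A
  rwa [ct_eq_t] at this

lemma psd_self_mul_t (A : Matrix m n ℝ) : (A * Aᵀ).PosSemidef := by
  have := Matrix.posSemidef_self_mul_conjTranspose A
  rwa [ct_eq_t] at this

open scoped MatrixOrder in
lemma trace_mul_nonneg' {P Q : Matrix n n ℝ} (hP : P.PosSemidef) (hQ : Q.PosSemidef) :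
    0 ≤ (P * Q).trace := by
  have hs : CFC.sqrt P * CFC.sqrt P = P := CFC.sqrt_mul_sqrt_self P hP.nonneg
  have hsym : (CFC.sqrt P).IsHermitian := (CFC.sqrt_nonneg P).posSemidef.isHermitian
  have hpsd : (CFC.sqrt P * Q * CFC.sqrt P).PosSemidef := by
    have := psd_t_mul_mul hQ (CFC.sqrt P)
    rwa [← ct_eq_t, hsym.eq] at this
  have e : (P * Q).trace = (CFC.sqrt P * Q * CFC.sqrt P).trace := by
    have e1 : (P * Q).trace = ((CFC.sqrt P * CFC.sqrt P) * Q).trace := by rw [hs]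
    rw [e1, Matrix.mul_assoc, Matrix.trace_mul_comm]
  rw [e]
  exact psd_trace_nonneg hpsd

/-- Right multiplication by a spectral-norm ≤ 1 matrix doesn't increase Frobenius norm. -/
lemma frob_mul_right_le (X : Matrix m n ℝ) (B : Matrix n n ℝ)
    (hB : ((1 : Matrix n n ℝ) - B * Bᵀ).PosSemidef) : frobNorm (X * B) ≤ frobNorm X := by
  refine le_of_sq_le_sq' (frobNorm_nonneg' X) ?_ (frobNorm_nonneg' _)
  rw [frobNorm_sq_eq_trace, frobNorm_sq_eq_trace]
  have e : ((X * B)ᵀ * (X * B)).trace = ((Xᵀ * X) * (B * Bᵀ)).trace := by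
    rw [Matrix.transpose_mul,
      show Bᵀ * Xᵀ * (X * B) = Bᵀ * ((Xᵀ * X) * B) by simp only [Matrix.mul_assoc],
      Matrix.trace_mul_comm, Matrix.mul_assoc]
  rw [e]
  have h := trace_mul_nonneg' (psd_t_mul_self X) hB
  rw [Matrix.mul_sub, Matrix.trace_sub, mul_one] at h
  linarith

/-- Left multiplication by a spectral-norm ≤ 1 matrix doesn't increase Frobenius norm. -/
lemma frob_mul_left_le (M : Matrix m n ℝ) (X : Matrix n k ℝ)
    (hM : ((1 : Matrix n n ℝ) - Mᵀ * M).PosSemidef) : frobNorm (M * X) ≤ frobNorm X := by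
  refine le_of_sq_le_sq' (frobNorm_nonneg' X) ?_ (frobNorm_nonneg' _)
  rw [frobNorm_sq_eq_trace, frobNorm_sq_eq_trace']
  have e : ((M * X)ᵀ * (M * X)).trace = ((X * Xᵀ) * (Mᵀ * M)).trace := by
    rw [Matrix.transpose_mul,
      show Xᵀ * Mᵀ * (M * X) = Xᵀ * ((Mᵀ * M) * X) by simp only [Matrix.mul_assoc],
      Matrix.trace_mul_comm, Matrix.mul_assoc, Matrix.trace_mul_comm]
  rw [e]
  have h := trace_mul_nonneg' (psd_self_mul_t X) hM
  rw [Matrix.mul_sub, Matrix.trace_sub, mul_one] at h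
  linarith

noncomputable def toE (A : Matrix m n ℝ) : EuclideanSpace ℝ (m × n) :=
  (WithLp.equiv 2 ((m × n) → ℝ)).symm (fun p => A p.1 p.2)

lemma frobNorm_eq_norm (A : Matrix m n ℝ) : frobNorm A = ‖toE A‖ := by
  rw [EuclideanSpace.norm_eq, frobNorm]
  congr 1
  rw [Fintype.sum_prod_type]
  simp [toE, Real.norm_eq_abs, sq_abs]

lemma frob_add_le (A B : Matrix m n ℝ) : frobNorm (A + B) ≤ frobNorm A + frobNorm B := by
  rw [frobNorm_eq_norm, frobNorm_eq_norm, frobNorm_eq_norm]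
  have h : toE (A + B) = toE A + toE B := rfl
  rw [h]
  exact norm_add_le _ _

lemma frobNorm_sub_comm (A B : Matrix m n ℝ) : frobNorm (A - B) = frobNorm (B - A) := by
  rw [frobNorm, frobNorm]
  congr 1
  congr 1; ext i; congr 1; ext j
  simp only [Matrix.sub_apply]
  ring


/-- For `Q` positive definite, `1 - (1+Q)⁻¹ ((1+Q)⁻¹)ᵀ` is PSD. -/
lemma one_sub_inv_sq_psd {Q : Matrix n n ℝ} (hQ : Q.PosDef) :
    ((1 : Matrix n n ℝ) - (1 + Q)⁻¹ * ((1 + Q)⁻¹)ᵀ).PosSemidef := by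
  set S := (1 + Q)⁻¹ with hSdef
  have hQt : Qᵀ = Q := by rw [← ct_eq_t, hQ.1.eq]
  have hPD : ((1 : Matrix n n ℝ) + Q).PosDef := Matrix.PosDef.one.add_posSemidef hQ.posSemidef
  have hdet : IsUnit ((1 : Matrix n n ℝ) + Q).det := isUnit_iff_ne_zero.mpr hPD.det_pos.ne'
  have hinv1 : (1 + Q) * S = 1 := Matrix.mul_nonsing_inv _ hdet
  have hinv2 : S * (1 + Q) = 1 := Matrix.nonsing_inv_mul _ hdet
  have hSt : Sᵀ = S := by
    rw [hSdef, Matrix.transpose_nonsing_inv, Matrix.transpose_add, Matrix.transpose_one, hQt]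
  have hMpsd : (Q + Q + Qᵀ * Q).PosSemidef :=
    (hQ.posSemidef.add hQ.posSemidef).add (psd_t_mul_self Q)
  have hcong := psd_t_mul_mul hMpsd S
  have e : Sᵀ * (Q + Q + Qᵀ * Q) * S = 1 - S * Sᵀ := by
    rw [hSt, hQt]
    have hex2 : Q + Q + Q * Q = ((1 : Matrix n n ℝ) + Q) * (1 + Q) - 1 := by
      rw [Matrix.add_mul, Matrix.one_mul, Matrix.mul_add, Matrix.mul_one]; abel
    have hone : S * (((1 : Matrix n n ℝ) + Q) * (1 + Q)) * S = 1 := by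
      rw [show S * (((1 : Matrix n n ℝ) + Q) * (1 + Q)) * S
          = (S * (1 + Q)) * ((1 + Q) * S) by simp only [Matrix.mul_assoc],
        hinv2, hinv1, Matrix.one_mul]
    rw [hex2, Matrix.mul_sub, Matrix.sub_mul, Matrix.mul_one, hone]
  rwa [e] at hcong

lemma stack_gram {κ : Type*} [Fintype κ] [DecidableEq κ] (A : Matrix m κ ℝ) (B : Matrix n κ ℝ) :
    (stackM A B)ᵀ * stackM A B = Aᵀ * A + Bᵀ * B := by
  ext i j
  simp [stackM, Matrix.mul_apply, Fintype.sum_sum_type]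

lemma stack_sub {κ : Type*} [DecidableEq κ] (A C : Matrix m κ ℝ) (B D : Matrix n κ ℝ) :
    stackM A B - stackM C D = stackM (A - C) (B - D) := by
  ext i j
  cases i <;> simp [stackM]

lemma frob_stack_sq {κ : Type*} [Fintype κ] [DecidableEq κ] (A : Matrix m κ ℝ) (B : Matrix n κ ℝ) :
    frobNorm (stackM A B) ^ 2 = frobNorm A ^ 2 + frobNorm B ^ 2 := by
  rw [frobNorm_sq, frobNorm_sq, frobNorm_sq, Fintype.sum_sum_type]
  simp [stackM]

end Aux

/-- the inverse Cayley parameterization `A(U) = Q₂(I + Q₁)⁻¹` is globally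
2-Lipschitz on `𝕆₊(p,r)`: if `U = [Q₁ᵀ,Q₂ᵀ]ᵀ` and `U₀ = [Q₀₁ᵀ,Q₀₂ᵀ]ᵀ` have orthonormal
columns and symmetric positive definite top blocks, then
`‖A(U) - A(U₀)‖_F ≤ 2‖U - U₀‖_F`. -/
theorem inverse_cayley_lipschitz
    {n1 n2 : Type*} [Fintype n1] [Fintype n2] [DecidableEq n1] [DecidableEq n2]
    (Q1 Q01 : Matrix n1 n1 ℝ) (Q2 Q02 : Matrix n2 n1 ℝ)
    (hQ1 : Q1.PosDef) (hQ01 : Q01.PosDef)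
    (hU : (stackM Q1 Q2)ᵀ * stackM Q1 Q2 = 1)
    (hU0 : (stackM Q01 Q02)ᵀ * stackM Q01 Q02 = 1) :
    frobNorm (Q2 * (1 + Q1)⁻¹ - Q02 * (1 + Q01)⁻¹)
      ≤ 2 * frobNorm (stackM Q1 Q2 - stackM Q01 Q02) := by
  set S1 := (1 + Q1)⁻¹ with hS1def
  set S0 := (1 + Q01)⁻¹ with hS0def
  have hPD1 : ((1 : Matrix n1 n1 ℝ) + Q1).PosDef := Matrix.PosDef.one.add_posSemidef hQ1.posSemidef
  have hPD0 : ((1 : Matrix n1 n1 ℝ) + Q01).PosDef :=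
    Matrix.PosDef.one.add_posSemidef hQ01.posSemidef
  have hdet1 : IsUnit ((1 : Matrix n1 n1 ℝ) + Q1).det := isUnit_iff_ne_zero.mpr hPD1.det_pos.ne'
  have hdet0 : IsUnit ((1 : Matrix n1 n1 ℝ) + Q01).det := isUnit_iff_ne_zero.mpr hPD0.det_pos.ne'
  have hinv1 : (1 + Q1) * S1 = 1 := Matrix.mul_nonsing_inv _ hdet1
  have hinv0 : S0 * (1 + Q01) = 1 := Matrix.nonsing_inv_mul _ hdet0
  have hS0t : S0ᵀ = S0 := by
    rw [hS0def, Matrix.transpose_nonsing_inv, Matrix.transpose_add, Matrix.transpose_one,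
      show Q01ᵀ = Q01 by rw [← ct_eq_t, hQ01.1.eq]]
  -- key algebraic identity
  have key : Q2 * S1 - Q02 * S0 = (Q2 - Q02) * S1 + (Q02 * S0) * ((Q01 - Q1) * S1) := by
    have t2 : Q02 * S0 * ((1 + Q01) * S1) = Q02 * S1 := by
      rw [show Q02 * S0 * ((1 + Q01) * S1) = Q02 * (S0 * (1 + Q01)) * S1 by
        simp only [Matrix.mul_assoc], hinv0, Matrix.mul_one]
    have hdiff : Q01 - Q1 = (1 + Q01) - (1 + Q1) := by abel
    rw [hdiff, Matrix.sub_mul (1 + Q01) (1 + Q1) S1, Matrix.mul_sub, t2, hinv1, Matrix.mul_one,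
      Matrix.sub_mul]
    abel
  -- spectral bounds
  have hB1 : ((1 : Matrix n1 n1 ℝ) - S1 * S1ᵀ).PosSemidef := one_sub_inv_sq_psd hQ1
  have hB0 : ((1 : Matrix n1 n1 ℝ) - S0 * S0ᵀ).PosSemidef := one_sub_inv_sq_psd hQ01
  have hgram0 : Q01ᵀ * Q01 + Q02ᵀ * Q02 = 1 := by rw [← stack_gram]; exact hU0
  have h02 : Q02ᵀ * Q02 = 1 - Q01ᵀ * Q01 := by
    rw [← hgram0]; abel
  have hM : ((1 : Matrix n1 n1 ℝ) - (Q02 * S0)ᵀ * (Q02 * S0)).PosSemidef := by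
    have e : (Q02 * S0)ᵀ * (Q02 * S0) = S0ᵀ * (Q02ᵀ * Q02) * S0 := by
      rw [Matrix.transpose_mul]; simp only [Matrix.mul_assoc]
    have e2 : (1 : Matrix n1 n1 ℝ) - (Q02 * S0)ᵀ * (Q02 * S0)
        = (1 - S0 * S0ᵀ) + S0ᵀ * (Q01ᵀ * Q01) * S0 := by
      rw [e, h02, hS0t, Matrix.mul_sub, Matrix.sub_mul, Matrix.mul_one]; abel
    rw [e2]
    exact hB0.add (psd_t_mul_mul (psd_t_mul_self Q01) S0)
  -- assemble
  set a := frobNorm (Q1 - Q01) with ha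
  set b := frobNorm (Q2 - Q02) with hb
  set c := frobNorm (stackM Q1 Q2 - stackM Q01 Q02) with hc
  have hc2 : c ^ 2 = a ^ 2 + b ^ 2 := by
    rw [hc, stack_sub, frob_stack_sq]
  have hbound1 : frobNorm ((Q2 - Q02) * S1) ≤ b := frob_mul_right_le _ _ hB1
  have hbound2 : frobNorm ((Q02 * S0) * ((Q01 - Q1) * S1)) ≤ a := by
    calc frobNorm ((Q02 * S0) * ((Q01 - Q1) * S1))
        ≤ frobNorm ((Q01 - Q1) * S1) := frob_mul_left_le _ _ hM
      _ ≤ frobNorm (Q01 - Q1) := frob_mul_right_le _ _ hB1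
      _ = a := frobNorm_sub_comm _ _
  have hLHS : frobNorm (Q2 * S1 - Q02 * S0) ≤ a + b := by
    rw [key]
    calc frobNorm ((Q2 - Q02) * S1 + (Q02 * S0) * ((Q01 - Q1) * S1))
        ≤ frobNorm ((Q2 - Q02) * S1) + frobNorm ((Q02 * S0) * ((Q01 - Q1) * S1)) :=
          frob_add_le _ _
      _ ≤ b + a := add_le_add hbound1 hbound2
      _ = a + b := add_comm _ _
  have habc : a + b ≤ 2 * c := by
    have ha0 : 0 ≤ a := frobNorm_nonneg' _
    have hb0 : 0 ≤ b := frobNorm_nonneg' _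
    have hc0 : 0 ≤ c := frobNorm_nonneg' _
    have hsq : (a + b) ^ 2 ≤ (2 * c) ^ 2 := by nlinarith [sq_nonneg (a - b)]
    exact le_of_sq_le_sq' (by linarith) hsq (by linarith)
  exact hLHS.trans habc
end

section
/- Let U = [Q₁ᵀ, Q₂ᵀ]ᵀ and U₀ = [Q₀₁ᵀ, Q₀₂ᵀ]ᵀ be two matrices in 𝕆₊(p,r) (Stiefel matrices whose top r×r blocks Q₁, Q₀₁ are symmetric positive definite). Then ‖U - U₀‖_F ≤ 2 ‖U Uᵀ - U₀ U₀ᵀ‖_F / min(λ_r(Q₀₁), λ_r(Q₁)). -/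
open Matrix

namespace StiefelAux

variable {m n p : Type*} [Fintype m] [Fintype n] [Fintype p]

/-- squared Frobenius norm -/
noncomputable def fs (A : Matrix m n ℝ) : ℝ := ∑ i, ∑ j, (A i j) ^ 2

/-- entrywise inner product -/
noncomputable def ip (A B : Matrix m n ℝ) : ℝ := ∑ i, ∑ j, A i j * B i j

lemma frobNorm_eq_sqrt_fs (A : Matrix m n ℝ) : frobNorm A = Real.sqrt (fs A) := rfl

lemma fs_nonneg (A : Matrix m n ℝ) : 0 ≤ fs A :=
  Finset.sum_nonneg fun _ _ => Finset.sum_nonneg fun _ _ => sq_nonneg _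

lemma fs_eq_trace (A : Matrix m n ℝ) : fs A = trace (Aᵀ * A) := by
  simp only [fs, Matrix.trace, Matrix.diag, Matrix.mul_apply, Matrix.transpose_apply, pow_two]
  exact Finset.sum_comm

lemma fs_eq_trace' (A : Matrix m n ℝ) : fs A = trace (A * Aᵀ) := by
  rw [fs_eq_trace, Matrix.trace_mul_comm]

lemma fs_transpose (A : Matrix m n ℝ) : fs Aᵀ = fs A := by
  simp only [fs, Matrix.transpose_apply]
  exact Finset.sum_comm

lemma ip_eq_trace (A B : Matrix m n ℝ) : ip A B = trace (Aᵀ * B) := by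
  simp only [ip, Matrix.trace, Matrix.diag, Matrix.mul_apply, Matrix.transpose_apply]
  exact Finset.sum_comm

lemma fs_add (A B : Matrix m n ℝ) : fs (A + B) = fs A + 2 * ip A B + fs B := by
  simp only [fs, ip, Matrix.add_apply, Finset.mul_sum, ← Finset.sum_add_distrib]
  congr 1; ext i; congr 1; ext j; ring

lemma fs_sub_le (A B : Matrix m n ℝ) : fs (A - B) ≤ 2 * fs A + 2 * fs B := by
  simp only [fs, Matrix.sub_apply, Finset.mul_sum, ← Finset.sum_add_distrib]
  refine Finset.sum_le_sum fun i _ => Finset.sum_le_sum fun j _ => ?_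
  nlinarith [sq_nonneg (A i j + B i j)]

lemma ip_le (A B : Matrix m n ℝ) : ip A B ≤ Real.sqrt (fs A) * Real.sqrt (fs B) := by
  have h1 : ip A B = ∑ x : m × n, A x.1 x.2 * B x.1 x.2 :=
    (Fintype.sum_prod_type (f := fun x : m × n => A x.1 x.2 * B x.1 x.2)).symm
  have h2 : fs A = ∑ x : m × n, (A x.1 x.2) ^ 2 :=
    (Fintype.sum_prod_type (f := fun x : m × n => (A x.1 x.2) ^ 2)).symm
  have h3 : fs B = ∑ x : m × n, (B x.1 x.2) ^ 2 :=
    (Fintype.sum_prod_type (f := fun x : m × n => (B x.1 x.2) ^ 2)).symm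
  have hcs := Finset.sum_mul_sq_le_sq_mul_sq Finset.univ (fun x : m × n => A x.1 x.2)
    (fun x : m × n => B x.1 x.2)
  calc ip A B ≤ |ip A B| := le_abs_self _
    _ = Real.sqrt ((ip A B) ^ 2) := (Real.sqrt_sq_eq_abs _).symm
    _ ≤ Real.sqrt (fs A * fs B) := by
        apply Real.sqrt_le_sqrt; rw [h1, h2, h3]; exact hcs
    _ = Real.sqrt (fs A) * Real.sqrt (fs B) := Real.sqrt_mul (fs_nonneg A) _

lemma sqrt_fs_add_le (A B : Matrix m n ℝ) :
    Real.sqrt (fs (A + B)) ≤ Real.sqrt (fs A) + Real.sqrt (fs B) := by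
  have h := fs_add A B
  have hA := fs_nonneg A; have hB := fs_nonneg B
  have h2 : fs (A + B) ≤ (Real.sqrt (fs A) + Real.sqrt (fs B)) ^ 2 := by
    have := ip_le A B
    have hA' : Real.sqrt (fs A) ^ 2 = fs A := Real.sq_sqrt hA
    have hB' : Real.sqrt (fs B) ^ 2 = fs B := Real.sq_sqrt hB
    nlinarith
  calc Real.sqrt (fs (A + B)) ≤ Real.sqrt ((Real.sqrt (fs A) + Real.sqrt (fs B)) ^ 2) :=
        Real.sqrt_le_sqrt h2
    _ = Real.sqrt (fs A) + Real.sqrt (fs B) := by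
        rw [Real.sqrt_sq (by positivity)]

lemma fs_mul_left_isometry [DecidableEq n] {W : Matrix m n ℝ} (h : Wᵀ * W = 1)
    (X : Matrix n p ℝ) : fs (W * X) = fs X := by
  rw [fs_eq_trace, fs_eq_trace, Matrix.transpose_mul, Matrix.mul_assoc,
    ← Matrix.mul_assoc Wᵀ W X, h, Matrix.one_mul]

lemma fs_mul_right_le [DecidableEq n] {W : Matrix m n ℝ} (h : Wᵀ * W = 1)
    (X : Matrix p m ℝ) : fs (X * W) ≤ fs X := by
  have hW : ∀ Z : Matrix n p ℝ, Wᵀ * (W * Z) = Z := by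
    intro Z; rw [← Matrix.mul_assoc, h, Matrix.one_mul]
  have key : (X - X * (W * Wᵀ)) * (X - X * (W * Wᵀ))ᵀ = X * Xᵀ - (X * W) * (X * W)ᵀ := by
    simp only [Matrix.transpose_sub, Matrix.transpose_mul, Matrix.transpose_transpose,
      Matrix.sub_mul, Matrix.mul_sub, Matrix.mul_assoc, hW]
    abel
  have h0 : 0 ≤ fs (X - X * (W * Wᵀ)) := fs_nonneg _
  rw [fs_eq_trace' (X - X * (W * Wᵀ)), key, Matrix.trace_sub] at h0
  rw [fs_eq_trace', fs_eq_trace' X]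
  linarith

lemma trace_mul_mul_transpose_nonneg {A : Matrix n n ℝ} (hA : A.PosSemidef)
    (X : Matrix m n ℝ) : 0 ≤ trace (X * A * Xᵀ) := by
  have hdiag : ∀ i, (X * A * Xᵀ) i i = dotProduct (star (X i)) (A *ᵥ (X i)) := by
    intro i
    simp only [Matrix.mul_apply, Matrix.transpose_apply, dotProduct, Matrix.mulVec,
      star_trivial, Finset.sum_mul, Finset.mul_sum, dotProduct]
    rw [Finset.sum_comm]
    apply Finset.sum_congr rfl; intro k _
    apply Finset.sum_congr rfl; intro l _
    ring
  rw [Matrix.trace]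
  apply Finset.sum_nonneg
  intro i _
  rw [Matrix.diag_apply, hdiag i]
  exact hA.dotProduct_mulVec_nonneg (X i)

lemma posSemidef_sub_smul_one [DecidableEq n] {A : Matrix n n ℝ} (hA : A.IsHermitian)
    {c : ℝ} (hc : ∀ i, c ≤ hA.eigenvalues i) : (A - c • 1).PosSemidef := by
  have hVV : (hA.eigenvectorUnitary : Matrix n n ℝ) * star (hA.eigenvectorUnitary : Matrix n n ℝ)
      = 1 := Matrix.mem_unitaryGroup_iff.mp hA.eigenvectorUnitary.2
  have hrepr : A - c • 1 = (hA.eigenvectorUnitary : Matrix n n ℝ) *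
      Matrix.diagonal (fun i => hA.eigenvalues i - c) *
      star (hA.eigenvectorUnitary : Matrix n n ℝ) := by
    have hd : Matrix.diagonal (fun i => hA.eigenvalues i - c)
        = Matrix.diagonal (RCLike.ofReal ∘ hA.eigenvalues) - c • 1 := by
      rw [Matrix.smul_one_eq_diagonal, ← Matrix.diagonal_sub]
      simp [RCLike.ofReal_real_eq_id]
    rw [hd, Matrix.mul_sub, Matrix.sub_mul, ← Unitary.conjStarAlgAut_apply (S := ℝ), ← hA.spectral_theorem]
    congr 1
    rw [Matrix.mul_smul, Matrix.mul_one, Matrix.smul_mul, hVV]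
  rw [hrepr, Matrix.star_eq_conjTranspose]
  exact (Matrix.posSemidef_diagonal_iff.mpr
    fun i => sub_nonneg.mpr (hc i)).mul_mul_conjTranspose_same _

lemma quad_lower [DecidableEq n] {A : Matrix n n ℝ} (hA : A.IsHermitian)
    {c : ℝ} (hc : ∀ i, c ≤ hA.eigenvalues i) (X : Matrix m n ℝ) :
    c * fs X ≤ trace (X * A * Xᵀ) := by
  have h0 := trace_mul_mul_transpose_nonneg (posSemidef_sub_smul_one hA hc) X
  have hexp : X * (A - c • 1) * Xᵀ = X * A * Xᵀ - c • (X * Xᵀ) := by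
    rw [Matrix.mul_sub, Matrix.sub_mul, Matrix.mul_smul, Matrix.mul_one, Matrix.smul_mul]
  rw [hexp, Matrix.trace_sub, Matrix.trace_smul, smul_eq_mul] at h0
  rw [fs_eq_trace']
  linarith

lemma stackM_mul {n1 n2 κ κ2 : Type*} [Fintype κ] (A : Matrix n1 κ ℝ) (B : Matrix n2 κ ℝ)
    (C : Matrix κ κ2 ℝ) : stackM A B * C = stackM (A * C) (B * C) := by
  ext i j
  cases i <;> simp [stackM, Matrix.mul_apply]

lemma stackM_sub {n1 n2 κ : Type*} (A C : Matrix n1 κ ℝ) (B D : Matrix n2 κ ℝ) :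
    stackM A B - stackM C D = stackM (A - C) (B - D) := by
  ext i j
  cases i <;> simp [stackM]

lemma fs_stackM {n1 n2 κ : Type*} [Fintype n1] [Fintype n2] [Fintype κ]
    (A : Matrix n1 κ ℝ) (B : Matrix n2 κ ℝ) : fs (stackM A B) = fs A + fs B := by
  simp [fs, stackM, Fintype.sum_sum_type]

lemma stackM_transpose_mul {n1 n2 κ : Type*} [Fintype n1] [Fintype n2]
    (A C : Matrix n1 κ ℝ) (B D : Matrix n2 κ ℝ) :
    (stackM A B)ᵀ * stackM C D = Aᵀ * C + Bᵀ * D := by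
  ext i j
  simp [stackM, Matrix.mul_apply, Matrix.transpose_apply, Fintype.sum_sum_type]

end StiefelAux

open StiefelAux

set_option maxHeartbeats 1000000 in
/-- for `U = [Q₁ᵀ,Q₂ᵀ]ᵀ` and `U₀ = [Q₀₁ᵀ,Q₀₂ᵀ]ᵀ` in `𝕆₊(p,r)` (orthonormal
columns, symmetric positive definite top blocks),
`‖U - U₀‖_F ≤ 2‖UUᵀ - U₀U₀ᵀ‖_F / min(λ_r(Q₀₁), λ_r(Q₁))`, where `λ_r` is the smallest
eigenvalue. -/
theorem stiefel_plus_diff_le_proj_diff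
    {n1 n2 : Type*} [Fintype n1] [Fintype n2] [DecidableEq n1] [DecidableEq n2]
    (Q1 Q01 : Matrix n1 n1 ℝ) (Q2 Q02 : Matrix n2 n1 ℝ)
    (hQ1 : Q1.PosDef) (hQ01 : Q01.PosDef)
    (hU : (stackM Q1 Q2)ᵀ * stackM Q1 Q2 = 1)
    (hU0 : (stackM Q01 Q02)ᵀ * stackM Q01 Q02 = 1) :
    frobNorm (stackM Q1 Q2 - stackM Q01 Q02)
      ≤ 2 * frobNorm (stackM Q1 Q2 * (stackM Q1 Q2)ᵀ - stackM Q01 Q02 * (stackM Q01 Q02)ᵀ)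
        / min (⨅ i, hQ01.1.eigenvalues i) (⨅ i, hQ1.1.eigenvalues i) := by
  rcases isEmpty_or_nonempty n1 with hempty | hne
  · simp [frobNorm, Real.iInf_of_isEmpty]
  set U : Matrix (n1 ⊕ n2) n1 ℝ := stackM Q1 Q2 with hUdef
  set U0 : Matrix (n1 ⊕ n2) n1 ℝ := stackM Q01 Q02 with hU0def
  have hQ1sym : Q1ᵀ = Q1 := by
    have h := hQ1.1
    rwa [Matrix.IsHermitian, Matrix.conjTranspose_eq_transpose_of_trivial] at h
  have hQ01sym : Q01ᵀ = Q01 := by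
    have h := hQ01.1
    rwa [Matrix.IsHermitian, Matrix.conjTranspose_eq_transpose_of_trivial] at h
  set lam0 := ⨅ i, hQ01.1.eigenvalues i with hl0
  set lam1 := ⨅ i, hQ1.1.eigenvalues i with hl1
  have hl0pos : 0 < lam0 := by
    obtain ⟨i, hi⟩ := exists_eq_ciInf_of_finite (f := fun i => hQ01.1.eigenvalues i)
    rw [hl0, ← hi]
    exact hQ01.eigenvalues_pos i
  have hl1pos : 0 < lam1 := by
    obtain ⟨i, hi⟩ := exists_eq_ciInf_of_finite (f := fun i => hQ1.1.eigenvalues i)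
    rw [hl1, ← hi]
    exact hQ1.eigenvalues_pos i
  have hl0le : ∀ i, lam0 ≤ hQ01.1.eigenvalues i :=
    fun i => ciInf_le (Finite.bddBelow_range _) i
  have hl1le : ∀ i, lam1 ≤ hQ1.1.eigenvalues i :=
    fun i => ciInf_le (Finite.bddBelow_range _) i
  have hblockU : Q1ᵀ * Q1 + Q2ᵀ * Q2 = 1 := by
    have h := hU
    rw [hUdef, stackM_transpose_mul] at h
    exact h
  -- the smallest eigenvalue of Q1 is at most 1
  have hl1le1 : lam1 ≤ 1 := by
    obtain ⟨i0⟩ := hne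
    refine le_trans (hl1le i0) ?_
    set v : n1 → ℝ := ⇑(hQ1.1.eigenvectorBasis i0) with hv
    set c : ℝ := hQ1.1.eigenvalues i0 with hc
    have hvec : Q1 *ᵥ v = c • v := hQ1.1.mulVec_eigenvectorBasis i0
    have hvne : v ≠ 0 := fun h => hQ1.1.eigenvectorBasis.orthonormal.ne_zero i0 (by
      ext j; have := congrFun h j; simpa [hv] using this)
    obtain ⟨i, hi⟩ : ∃ i, v i ≠ 0 := by
      by_contra h
      push_neg at h
      exact hvne (funext h)
    have hvv : 0 < dotProduct v v := by
      apply Finset.sum_pos'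
      · intro j _; exact mul_self_nonneg _
      · exact ⟨i, Finset.mem_univ i, mul_self_pos.mpr hi⟩
    have hq1 : dotProduct v ((Q1ᵀ * Q1) *ᵥ v) = c ^ 2 * dotProduct v v := by
      rw [← Matrix.mulVec_mulVec, hvec, Matrix.mulVec_smul, dotProduct_smul,
        Matrix.dotProduct_mulVec, Matrix.vecMul_transpose, hvec, smul_dotProduct]
      simp [smul_eq_mul]; ring
    have hq2 : 0 ≤ dotProduct v ((Q2ᵀ * Q2) *ᵥ v) := by
      rw [← Matrix.mulVec_mulVec, Matrix.dotProduct_mulVec, Matrix.vecMul_transpose]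
      exact Finset.sum_nonneg fun j _ => mul_self_nonneg _
    have hsum : dotProduct v ((Q1ᵀ * Q1) *ᵥ v) + dotProduct v ((Q2ᵀ * Q2) *ᵥ v)
        = dotProduct v v := by
      rw [← dotProduct_add, ← Matrix.add_mulVec, hblockU, Matrix.one_mulVec]
    have hcpos : 0 < c := hQ1.eigenvalues_pos i0
    have hle : c ^ 2 * (v ⬝ᵥ v) ≤ 1 * (v ⬝ᵥ v) := by rw [one_mul]; linarith
    have hc2 : c ^ 2 ≤ 1 := le_of_mul_le_mul_right hle hvv
    nlinarith
  -- main matrix identities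
  set M : Matrix n1 n1 ℝ := Uᵀ * U0 with hM
  have hMT : Mᵀ = U0ᵀ * U := by
    rw [hM, Matrix.transpose_mul, Matrix.transpose_transpose]
  set N : Matrix n1 n1 ℝ := Mᵀ - 1 with hN
  set DP : Matrix (n1 ⊕ n2) (n1 ⊕ n2) ℝ := U * Uᵀ - U0 * U0ᵀ with hDP
  have hDPU : DP * U = U - U0 * Mᵀ := by
    rw [hDP, Matrix.sub_mul, Matrix.mul_assoc, Matrix.mul_assoc, hU, Matrix.mul_one, ← hMT]
  have hDPU0 : DP * U0 = U * M - U0 := by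
    rw [hDP, Matrix.sub_mul, Matrix.mul_assoc, Matrix.mul_assoc, hU0, Matrix.mul_one, ← hM]
  have hdecomp : U - U0 = DP * U + U0 * N := by
    rw [hN, Matrix.mul_sub, Matrix.mul_one, hDPU]
    abel
  have h1 : frobNorm (DP * U) ≤ frobNorm DP := by
    rw [frobNorm_eq_sqrt_fs, frobNorm_eq_sqrt_fs]
    exact Real.sqrt_le_sqrt (fs_mul_right_le hU _)
  have h2 : frobNorm (U0 * N) = frobNorm N := by
    rw [frobNorm_eq_sqrt_fs, frobNorm_eq_sqrt_fs, fs_mul_left_isometry hU0]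
  have hstep1 : frobNorm (U - U0) ≤ frobNorm DP + frobNorm N := by
    rw [hdecomp, frobNorm_eq_sqrt_fs]
    refine le_trans (sqrt_fs_add_le _ _) ?_
    rw [← frobNorm_eq_sqrt_fs, ← frobNorm_eq_sqrt_fs]
    exact add_le_add h1 (le_of_eq h2)
  -- block bounds
  have hA1 : fs (Q1 * M - Q01) ≤ fs DP := by
    have hb : DP * U0 = stackM (Q1 * M - Q01) (Q2 * M - Q02) := by
      rw [hDPU0, hUdef, hU0def, stackM_mul, stackM_sub]
    have h' := fs_mul_right_le hU0 DP
    rw [hb, fs_stackM] at h'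
    linarith [fs_nonneg (Q2 * M - Q02)]
  have hA2 : fs (Q1 - Q01 * Mᵀ) ≤ fs DP := by
    have hb : DP * U = stackM (Q1 - Q01 * Mᵀ) (Q2 - Q02 * Mᵀ) := by
      rw [hDPU, hUdef, hU0def, stackM_mul, stackM_sub]
    have h' := fs_mul_right_le hU DP
    rw [hb, fs_stackM] at h'
    linarith [fs_nonneg (Q2 - Q02 * Mᵀ)]
  set E : Matrix n1 n1 ℝ := (Q1 * M - Q01)ᵀ - (Q1 - Q01 * Mᵀ) with hE
  have hEeq : E = Q01 * N + N * Q1 := by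
    rw [hE, hN, Matrix.transpose_sub, Matrix.transpose_mul, hQ1sym, hQ01sym,
      Matrix.sub_mul, Matrix.mul_sub, Matrix.one_mul, Matrix.mul_one]
    abel
  have hfsE : fs E ≤ 4 * fs DP := by
    have h' := fs_sub_le (Q1 * M - Q01)ᵀ (Q1 - Q01 * Mᵀ)
    rw [fs_transpose] at h'
    rw [hE]
    linarith
  have hsylv : (lam0 + lam1) * fs N ≤ ip N E := by
    have e1 : lam0 * fs N ≤ trace (Nᵀ * Q01 * N) := by
      have h' := quad_lower hQ01.1 hl0le Nᵀ
      rwa [Matrix.transpose_transpose, fs_transpose] at h'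
    have e2 : lam1 * fs N ≤ trace (N * Q1 * Nᵀ) := quad_lower hQ1.1 hl1le N
    have e3 : ip N E = trace (Nᵀ * Q01 * N) + trace (N * Q1 * Nᵀ) := by
      rw [ip_eq_trace, hEeq, Matrix.mul_add, Matrix.trace_add]
      congr 1
      · rw [Matrix.mul_assoc]
      · rw [Matrix.trace_mul_comm, Matrix.mul_assoc]
    rw [e3]
    linarith
  have hCS : ip N E ≤ frobNorm N * (2 * frobNorm DP) := by
    refine le_trans (ip_le N E) ?_
    rw [← frobNorm_eq_sqrt_fs, ← frobNorm_eq_sqrt_fs]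
    have hEb : frobNorm E ≤ 2 * frobNorm DP := by
      rw [frobNorm_eq_sqrt_fs, frobNorm_eq_sqrt_fs]
      have h4 : (2 : ℝ) * Real.sqrt (fs DP) = Real.sqrt (4 * fs DP) := by
        rw [Real.sqrt_mul (by norm_num : (0:ℝ) ≤ 4), show Real.sqrt 4 = 2 by
          rw [show (4:ℝ) = 2 ^ 2 by norm_num, Real.sqrt_sq (by norm_num : (0:ℝ) ≤ 2)]]
      rw [h4]
      exact Real.sqrt_le_sqrt hfsE
    have hNnn : 0 ≤ frobNorm N := Real.sqrt_nonneg _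
    exact mul_le_mul_of_nonneg_left hEb hNnn
  have hNb : frobNorm N * (lam0 + lam1) ≤ 2 * frobNorm DP := by
    have hchain := le_trans hsylv hCS
    have hfsN : fs N = frobNorm N ^ 2 := by
      rw [frobNorm_eq_sqrt_fs, Real.sq_sqrt (fs_nonneg _)]
    rw [hfsN] at hchain
    rcases eq_or_lt_of_le (Real.sqrt_nonneg (fs N)) with hz | hz
    · rw [frobNorm_eq_sqrt_fs, ← hz]
      have hDPnn : (0:ℝ) ≤ frobNorm DP := Real.sqrt_nonneg _
      nlinarith
    · have hpos : 0 < frobNorm N := by rw [frobNorm_eq_sqrt_fs]; exact hz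
      nlinarith
  -- final assembly
  have hDPnn : 0 ≤ frobNorm DP := Real.sqrt_nonneg _
  have hNnn : 0 ≤ frobNorm N := Real.sqrt_nonneg _
  have hlam : 0 < min lam0 lam1 := lt_min hl0pos hl1pos
  rw [le_div_iff₀ hlam]
  have hmin0 : min lam0 lam1 ≤ lam0 := min_le_left _ _
  have hmin1 : min lam0 lam1 ≤ lam1 := min_le_right _ _
  have hminle1 : min lam0 lam1 ≤ 1 := le_trans hmin1 hl1le1
  nlinarith [mul_le_mul_of_nonneg_right hstep1 hlam.le,
    mul_nonneg hDPnn (sub_nonneg.mpr hminle1),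
    mul_nonneg hNnn (by linarith : (0:ℝ) ≤ lam0 + lam1 - 2 * min lam0 lam1), hNb]
end

section
/- Let A₀ ∈ ℝ^{(p-r)×r} with ‖A₀‖₂ < 1 and define C₁₁ = (I_r + A₀ᵀA₀)⁻¹, C₂₂ = I_{p-r} - A₀(I_r + A₀ᵀA₀)⁻¹A₀ᵀ, C₁₂ = -(I_r + A₀ᵀA₀)⁻¹A₀ᵀ, C₂₁ = A₀(I_r + A₀ᵀA₀)⁻¹. If r ≥ 2, then the smallest singular value of C₁₁ ⊗ C₂₂ - (C₂₁ᵀ ⊗ C₁₂ᵀ) K_{(p-r)r} is at least (1 - ‖A₀‖₂²)/(1 + ‖A₀‖₂²)², where K_{(p-r)r} is the commutation matrix. -/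
set_option linter.unusedSectionVars false
set_option linter.unusedVariables false
set_option maxHeartbeats 1000000

open Matrix
open scoped Kronecker

/-- Spectral norm (largest singular value) of a real matrix, as the ℓ²→ℓ² operator norm. -/
noncomputable def specNorm {m n : Type*} [Fintype m] [Fintype n] [DecidableEq n]
    (A : Matrix m n ℝ) : ℝ :=
  ‖LinearMap.toContinuousLinearMap (Matrix.toEuclideanLin A)‖

/-- Euclidean norm of a finitely supported real vector. -/
noncomputable def vecNorm {n : Type*} [Fintype n] (v : n → ℝ) : ℝ :=
  Real.sqrt (∑ i, v i ^ 2)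

section Aux0

variable {m n : Type*} [Fintype m] [Fintype n]

lemma vecNorm_eq (v : n → ℝ) : vecNorm v = ‖(WithLp.equiv 2 (n → ℝ)).symm v‖ := by
  rw [EuclideanSpace.norm_eq]
  simp [vecNorm, sq_abs]

lemma vecNorm_nonneg (v : n → ℝ) : 0 ≤ vecNorm v := Real.sqrt_nonneg _

lemma sq_vecNorm (v : n → ℝ) : vecNorm v ^ 2 = ∑ i, v i ^ 2 := by
  rw [vecNorm, Real.sq_sqrt]
  positivity

lemma sq_vecNorm' (v : n → ℝ) : vecNorm v ^ 2 = v ⬝ᵥ v := by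
  rw [sq_vecNorm]; simp [dotProduct, sq]

lemma vecNorm_add_le (u v : n → ℝ) : vecNorm (u + v) ≤ vecNorm u + vecNorm v := by
  simp only [vecNorm_eq]
  rw [show (WithLp.equiv 2 (n → ℝ)).symm (u + v)
      = (WithLp.equiv 2 (n → ℝ)).symm u + (WithLp.equiv 2 (n → ℝ)).symm v from rfl]
  exact norm_add_le _ _

lemma dotProduct_le (u v : n → ℝ) : u ⬝ᵥ v ≤ vecNorm u * vecNorm v := by
  simp only [vecNorm_eq]
  have := real_inner_le_norm ((WithLp.equiv 2 (n → ℝ)).symm u) ((WithLp.equiv 2 (n → ℝ)).symm v)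
  rw [PiLp.inner_apply] at this
  simpa [dotProduct, mul_comm] using this

end Aux0

section Aux

variable {m n : Type*} [Fintype m] [Fintype n] [DecidableEq m] [DecidableEq n]

lemma mulVec_bound (A : Matrix m n ℝ) (v : n → ℝ) :
    vecNorm (A *ᵥ v) ≤ specNorm A * vecNorm v := by
  simp only [vecNorm_eq]
  have := (LinearMap.toContinuousLinearMap (Matrix.toEuclideanLin A)).le_opNorm
    ((WithLp.equiv 2 (n → ℝ)).symm v)
  simpa [specNorm, Matrix.toEuclideanLin_toLp] using this

lemma specNorm_nonneg (A : Matrix m n ℝ) : 0 ≤ specNorm A := norm_nonneg _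

lemma transpose_mulVec_bound (A : Matrix m n ℝ) (v : m → ℝ) :
    vecNorm (Aᵀ *ᵥ v) ≤ specNorm A * vecNorm v := by
  have h1 : vecNorm (Aᵀ *ᵥ v) ^ 2 = v ⬝ᵥ (A *ᵥ (Aᵀ *ᵥ v)) := by
    rw [sq_vecNorm', Matrix.dotProduct_mulVec (v := v), Matrix.mulVec_transpose]
  have h2 : v ⬝ᵥ (A *ᵥ (Aᵀ *ᵥ v)) ≤ vecNorm v * (specNorm A * vecNorm (Aᵀ *ᵥ v)) :=
    (dotProduct_le _ _).trans (by
      have := mulVec_bound A (Aᵀ *ᵥ v)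
      nlinarith [vecNorm_nonneg v])
  rcases eq_or_lt_of_le (vecNorm_nonneg (Aᵀ *ᵥ v)) with h | h
  · rw [← h]
    exact mul_nonneg (specNorm_nonneg A) (vecNorm_nonneg v)
  · have hb : vecNorm (Aᵀ *ᵥ v) * vecNorm (Aᵀ *ᵥ v)
        ≤ (specNorm A * vecNorm v) * vecNorm (Aᵀ *ᵥ v) := by nlinarith
    exact le_of_mul_le_mul_right hb h

lemma arith_key (s V N a : ℝ) (hs0 : 0 ≤ s) (hs1 : s < 1) (hV : 0 ≤ V) (hN : 0 ≤ N)
    (ha : 0 ≤ a) (h1 : N^2 + a^2 ≤ V*a) (h2 : a ≤ s*N) : N*(1+s^2) ≤ s*V := by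
  rcases eq_or_lt_of_le ha with h | h
  · have hN0 : N = 0 := by nlinarith
    rw [hN0]; nlinarith
  · have key : a*(1+s^2) ≤ s^2*V := by nlinarith
    have h3 : 0 ≤ s^2*V - (1+s^2)*a := by nlinarith
    have h4 : 0 ≤ V - (1+s^2)*a := by
      nlinarith [mul_nonneg (mul_nonneg (by linarith : (0:ℝ) ≤ 1-s)
        (by linarith : (0:ℝ) ≤ 1+s)) hV]
    have sq : (N*(1+s^2))^2 ≤ (s*V)^2 := by
      nlinarith [mul_nonneg h3 h4,
        mul_le_mul_of_nonneg_left h1 (show (0:ℝ) ≤ (1+s^2)^2 by positivity)]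
    have hg : 0 ≤ N*(1+s^2) := by positivity
    have hg2 : 0 ≤ s*V := mul_nonneg hs0 hV
    exact (pow_le_pow_iff_left₀ hg hg2 two_ne_zero).mp sq

lemma S_posdef (A : Matrix m n ℝ) : (1 + Aᵀ * A).PosDef := by
  have h1 : (Aᵀ * A).PosSemidef := by
    simpa using Matrix.posSemidef_conjTranspose_mul_self A
  exact Matrix.PosDef.add_posSemidef Matrix.PosDef.one h1

lemma S_det_unit (A : Matrix m n ℝ) : IsUnit (1 + Aᵀ * A).det :=
  (Matrix.isUnit_iff_isUnit_det _).mp (S_posdef A).isUnit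

lemma S_mul_inv (A : Matrix m n ℝ) : (1 + Aᵀ * A) * (1 + Aᵀ * A)⁻¹ = 1 :=
  Matrix.mul_nonsing_inv _ (S_det_unit A)

lemma inv_mul_S (A : Matrix m n ℝ) : (1 + Aᵀ * A)⁻¹ * (1 + Aᵀ * A) = 1 :=
  Matrix.nonsing_inv_mul _ (S_det_unit A)

lemma B_symm (A : Matrix m n ℝ) : ((1 + Aᵀ * A)⁻¹)ᵀ = (1 + Aᵀ * A)⁻¹ := by
  rw [Matrix.transpose_nonsing_inv]
  congr 1
  simp [Matrix.transpose_add, Matrix.transpose_mul]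

lemma dot_transpose_mulVec (A : Matrix m n ℝ) (u : m → ℝ) (w : n → ℝ) :
    (Aᵀ *ᵥ u) ⬝ᵥ w = u ⬝ᵥ (A *ᵥ w) := by
  rw [Matrix.dotProduct_mulVec (v := u), Matrix.mulVec_transpose]

lemma E_bound (A : Matrix m n ℝ) (s : ℝ) (hs0 : 0 ≤ s) (hs1 : s < 1)
    (hA : ∀ v, vecNorm (A *ᵥ v) ≤ s * vecNorm v)
    (hAT : ∀ v, vecNorm (Aᵀ *ᵥ v) ≤ s * vecNorm v) (v : m → ℝ) :
    vecNorm (((1 + Aᵀ * A)⁻¹ * Aᵀ) *ᵥ v) * (1 + s ^ 2) ≤ s * vecNorm v := by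
  set w : n → ℝ := ((1 + Aᵀ * A)⁻¹ * Aᵀ) *ᵥ v with hw
  have hSw : (1 + Aᵀ * A) *ᵥ w = Aᵀ *ᵥ v := by
    rw [hw, Matrix.mulVec_mulVec, ← Matrix.mul_assoc, S_mul_inv, Matrix.one_mul]
  have h1 : w ⬝ᵥ w + (A *ᵥ w) ⬝ᵥ (A *ᵥ w) = v ⬝ᵥ (A *ᵥ w) := by
    have l1 : ((1 + Aᵀ * A) *ᵥ w) ⬝ᵥ w = w ⬝ᵥ w + (A *ᵥ w) ⬝ᵥ (A *ᵥ w) := by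
      rw [Matrix.add_mulVec, Matrix.one_mulVec, add_dotProduct,
        ← Matrix.mulVec_mulVec, dot_transpose_mulVec]
    have l2 : ((1 + Aᵀ * A) *ᵥ w) ⬝ᵥ w = v ⬝ᵥ (A *ᵥ w) := by
      rw [hSw, dot_transpose_mulVec]
    rw [← l1, l2]
  apply arith_key s (vecNorm v) (vecNorm w) (vecNorm (A *ᵥ w)) hs0 hs1
    (vecNorm_nonneg v) (vecNorm_nonneg w) (vecNorm_nonneg _) _ (hA w)
  rw [sq_vecNorm', sq_vecNorm', h1]
  exact dotProduct_le _ _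

lemma commute_inv (A : Matrix m n ℝ) :
    A * (1 + Aᵀ * A)⁻¹ = (1 + A * Aᵀ)⁻¹ * A := by
  have h : (1 + A * Aᵀ) * (A * (1 + Aᵀ * A)⁻¹) = A := by
    have : (1 + A * Aᵀ) * A = A * (1 + Aᵀ * A) := by
      simp [Matrix.add_mul, Matrix.mul_add, Matrix.mul_assoc]
    rw [← Matrix.mul_assoc, this, Matrix.mul_assoc, S_mul_inv, Matrix.mul_one]
  calc A * (1 + Aᵀ * A)⁻¹
      = ((1 + A * Aᵀ)⁻¹ * (1 + A * Aᵀ)) * (A * (1 + Aᵀ * A)⁻¹) := by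
        have := inv_mul_S (A := Aᵀ)
        simp only [Matrix.transpose_transpose] at this
        rw [this, Matrix.one_mul]
    _ = (1 + A * Aᵀ)⁻¹ * A := by rw [Matrix.mul_assoc, h]

lemma ET_bound (A : Matrix m n ℝ) (s : ℝ) (hs0 : 0 ≤ s) (hs1 : s < 1)
    (hA : ∀ v, vecNorm (A *ᵥ v) ≤ s * vecNorm v)
    (hAT : ∀ v, vecNorm (Aᵀ *ᵥ v) ≤ s * vecNorm v) (v : n → ℝ) :
    vecNorm ((A * (1 + Aᵀ * A)⁻¹) *ᵥ v) * (1 + s ^ 2) ≤ s * vecNorm v := by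
  have := E_bound Aᵀ s hs0 hs1 hAT (by simpa using hA) v
  simp only [Matrix.transpose_transpose] at this
  rwa [← commute_inv] at this

lemma S_mulVec_bound (A : Matrix m n ℝ) (s : ℝ) (hs0 : 0 ≤ s)
    (hA : ∀ v, vecNorm (A *ᵥ v) ≤ s * vecNorm v)
    (hAT : ∀ v, vecNorm (Aᵀ *ᵥ v) ≤ s * vecNorm v) (w : n → ℝ) :
    vecNorm ((1 + Aᵀ * A) *ᵥ w) ≤ (1 + s ^ 2) * vecNorm w := by
  have h1 : (1 + Aᵀ * A) *ᵥ w = w + Aᵀ *ᵥ (A *ᵥ w) := by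
    rw [Matrix.add_mulVec, Matrix.one_mulVec, Matrix.mulVec_mulVec]
  rw [h1]
  calc vecNorm (w + Aᵀ *ᵥ (A *ᵥ w)) ≤ vecNorm w + vecNorm (Aᵀ *ᵥ (A *ᵥ w)) :=
        vecNorm_add_le _ _
    _ ≤ vecNorm w + s * (s * vecNorm w) := by
        have h2 := hAT (A *ᵥ w)
        have h3 := hA w
        nlinarith [vecNorm_nonneg (A *ᵥ w)]
    _ = (1 + s ^ 2) * vecNorm w := by ring

lemma C22_mul (A : Matrix m n ℝ) :
    (1 - A * (1 + Aᵀ * A)⁻¹ * Aᵀ) * (1 + A * Aᵀ) = 1 := by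
  have h := inv_mul_S (A := A)
  have hM : A * (1 + Aᵀ * A)⁻¹ * Aᵀ + A * (1 + Aᵀ * A)⁻¹ * Aᵀ * (A * Aᵀ) = A * Aᵀ := by
    have h1 : A * (1 + Aᵀ * A)⁻¹ * Aᵀ + A * (1 + Aᵀ * A)⁻¹ * Aᵀ * (A * Aᵀ)
        = A * ((1 + Aᵀ * A)⁻¹ * (1 + Aᵀ * A)) * Aᵀ := by
      simp only [Matrix.mul_add, Matrix.add_mul, Matrix.mul_one, Matrix.one_mul,
        Matrix.mul_assoc]
    rw [h1, h, Matrix.mul_one]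
  rw [Matrix.sub_mul, Matrix.one_mul, Matrix.mul_add, Matrix.mul_one, hM,
    add_sub_cancel_right]

end Aux

section Frob

noncomputable def frob {k l : Type*} [Fintype k] [Fintype l] (Y : Matrix k l ℝ) : ℝ :=
  vecNorm (fun p : k × l => Y p.1 p.2)

variable {k l k' l' : Type*} [Fintype k] [Fintype l] [Fintype k'] [Fintype l']

lemma frob_nonneg (Y : Matrix k l ℝ) : 0 ≤ frob Y := vecNorm_nonneg _

lemma sq_frob (Y : Matrix k l ℝ) : frob Y ^ 2 = ∑ i, ∑ j, Y i j ^ 2 := by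
  rw [frob, sq_vecNorm, Fintype.sum_prod_type]

lemma frob_transpose (Y : Matrix k l ℝ) : frob Yᵀ = frob Y := by
  rw [frob, frob, vecNorm, vecNorm]
  congr 1
  rw [Fintype.sum_prod_type, Fintype.sum_prod_type, Finset.sum_comm]
  rfl

lemma frob_mul_le_left (P : Matrix k' k ℝ) (c : ℝ) (hc : 0 ≤ c)
    (h : ∀ v : k → ℝ, vecNorm (P *ᵥ v) ≤ c * vecNorm v) (Y : Matrix k l ℝ) :
    frob (P * Y) ≤ c * frob Y := by
  have hsq : frob (P * Y) ^ 2 ≤ (c * frob Y) ^ 2 := by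
    rw [sq_frob, mul_pow, sq_frob]
    conv_lhs => rw [Finset.sum_comm]
    conv_rhs => rw [Finset.sum_comm]
    rw [Finset.mul_sum]
    apply Finset.sum_le_sum
    intro j _
    have key : ∑ i, (P * Y) i j ^ 2 = vecNorm (P *ᵥ fun a => Y a j) ^ 2 := by
      rw [sq_vecNorm]
      refine Finset.sum_congr rfl fun i _ => ?_
      congr 1
    rw [key, ← sq_vecNorm]
    have h1 := h (fun a => Y a j)
    nlinarith [vecNorm_nonneg (P *ᵥ fun a => Y a j), vecNorm_nonneg (fun a : k => Y a j)]
  have h1 : 0 ≤ frob (P * Y) := frob_nonneg _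
  have h2 : 0 ≤ c * frob Y := mul_nonneg hc (frob_nonneg _)
  exact (pow_le_pow_iff_left₀ h1 h2 two_ne_zero).mp hsq

lemma frob_mul_le_right (P : Matrix l l' ℝ) (c : ℝ) (hc : 0 ≤ c)
    (h : ∀ v : l → ℝ, vecNorm (Pᵀ *ᵥ v) ≤ c * vecNorm v) (Y : Matrix k l ℝ) :
    frob (Y * P) ≤ c * frob Y := by
  rw [← frob_transpose (Y * P), Matrix.transpose_mul, ← frob_transpose Y]
  exact frob_mul_le_left Pᵀ c hc h Yᵀ

lemma frob_add_le_s11 (Y Z : Matrix k l ℝ) : frob (Y + Z) ≤ frob Y + frob Z := by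
  have : (fun p : k × l => (Y + Z) p.1 p.2)
      = (fun p : k × l => Y p.1 p.2) + fun p : k × l => Z p.1 p.2 := by
    funext p; simp [Matrix.add_apply]
  rw [frob, this]
  exact vecNorm_add_le _ _

lemma frob_neg (Y : Matrix k l ℝ) : frob (-Y) = frob Y := by
  rw [frob, frob, vecNorm, vecNorm]
  congr 1
  refine Finset.sum_congr rfl fun p _ => ?_
  simp [Matrix.neg_apply]

end Frob

section Kron

variable {n1 n2 : Type*} [Fintype n1] [Fintype n2] [DecidableEq n1] [DecidableEq n2]

lemma mulK (T : Matrix (n1 × n2) (n2 × n1) ℝ) :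
    T * Matrix.of (fun (q : n2 × n1) (q' : n1 × n2) =>
        if q.1 = q'.2 ∧ q.2 = q'.1 then (1 : ℝ) else 0)
      = Matrix.of (fun p q => T p (q.2, q.1)) := by
  ext p q
  simp only [Matrix.mul_apply, Matrix.of_apply]
  rw [Finset.sum_eq_single (q.2, q.1)]
  · simp
  · intro r _ hr
    have : ¬(r.1 = q.2 ∧ r.2 = q.1) := by
      rintro ⟨h1, h2⟩; exact hr (Prod.ext h1 h2)
    simp [this]
  · simp

lemma vec_identity (B : Matrix n1 n1 ℝ) (C : Matrix n2 n2 ℝ) (E : Matrix n1 n2 ℝ)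
    (hB : Bᵀ = B) (hC : Cᵀ = C) (x : n1 × n2 → ℝ) :
    ((B ⊗ₖ C - (Eᵀᵀ ⊗ₖ (-E)ᵀ)
        * Matrix.of (fun (q : n2 × n1) (q' : n1 × n2) =>
            if q.1 = q'.2 ∧ q.2 = q'.1 then (1 : ℝ) else 0)) *ᵥ x)
      = fun p => (B * (Matrix.of fun i j => x (i, j)) * C
          + E * (Matrix.of fun i j => x (i, j))ᵀ * E) p.1 p.2 := by
  funext p
  rw [mulK]
  simp only [Matrix.mulVec, dotProduct, Matrix.sub_apply, Matrix.of_apply,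
    Matrix.kroneckerMap_apply, Matrix.transpose_apply, Matrix.neg_apply,
    Matrix.add_apply, Matrix.mul_apply, Fintype.sum_prod_type]
  rw [Finset.sum_comm]
  have hC' : ∀ a b, C a b = C b a := fun a b => (congrFun (congrFun hC a) b).symm
  have h1 : (∑ y : n2, (∑ z : n1, B p.1 z * x (z, y)) * C y p.2)
      = ∑ y : n2, ∑ z : n1, B p.1 z * C p.2 y * x (z, y) := by
    simp only [Finset.sum_mul]
    exact Finset.sum_congr rfl fun y _ => Finset.sum_congr rfl fun z _ => by
      rw [hC' y p.2]; ring
  have h2 : (∑ z : n1, (∑ y : n2, E p.1 y * x (z, y)) * E z p.2)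
      = ∑ y : n2, ∑ z : n1, E p.1 y * E z p.2 * x (z, y) := by
    simp only [Finset.sum_mul]
    rw [Finset.sum_comm]
    exact Finset.sum_congr rfl fun y _ => Finset.sum_congr rfl fun z _ => by ring
  rw [h1, h2, ← Finset.sum_add_distrib]
  refine Finset.sum_congr rfl fun y _ => ?_
  rw [← Finset.sum_add_distrib]
  refine Finset.sum_congr rfl fun z _ => ?_
  ring

end Kron

/-- with `C₁₁ = (I + A₀ᵀA₀)⁻¹`, `C₂₂ = I - A₀(I + A₀ᵀA₀)⁻¹A₀ᵀ`,
`C₁₂ = -(I + A₀ᵀA₀)⁻¹A₀ᵀ`, `C₂₁ = A₀(I + A₀ᵀA₀)⁻¹`, `‖A₀‖₂ < 1`, and `r ≥ 2`, the smallest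
singular value of `C₁₁ ⊗ C₂₂ - (C₂₁ᵀ ⊗ C₁₂ᵀ) K` (K the commutation matrix) is at least
`(1 - ‖A₀‖₂²)/(1 + ‖A₀‖₂²)²`, expressed as a lower bound `c‖x‖ ≤ ‖Mx‖` for all `x`. -/
theorem commutation_kronecker_sigma_min
    {n1 n2 : Type*} [Fintype n1] [Fintype n2] [DecidableEq n1] [DecidableEq n2]
    (A₀ : Matrix n2 n1 ℝ) (hA : specNorm A₀ < 1) (hr : 2 ≤ Fintype.card n1) :
    ∀ x : n1 × n2 → ℝ,
      (1 - specNorm A₀ ^ 2) / (1 + specNorm A₀ ^ 2) ^ 2 * vecNorm x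
        ≤ vecNorm
          ((((1 + A₀ᵀ * A₀)⁻¹ ⊗ₖ (1 - A₀ * (1 + A₀ᵀ * A₀)⁻¹ * A₀ᵀ))
              - ((A₀ * (1 + A₀ᵀ * A₀)⁻¹)ᵀ ⊗ₖ (-((1 + A₀ᵀ * A₀)⁻¹ * A₀ᵀ))ᵀ)
                * Matrix.of (fun (q : n2 × n1) (q' : n1 × n2) =>
                    if q.1 = q'.2 ∧ q.2 = q'.1 then (1 : ℝ) else 0)) *ᵥ x) := by
  intro x
  set s := specNorm A₀ with hsdef
  have hs0 : 0 ≤ s := specNorm_nonneg A₀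
  have hs1 : s < 1 := hA
  have hAb : ∀ v, vecNorm (A₀ *ᵥ v) ≤ s * vecNorm v := mulVec_bound A₀
  have hATb : ∀ v, vecNorm (A₀ᵀ *ᵥ v) ≤ s * vecNorm v := transpose_mulVec_bound A₀
  set B : Matrix n1 n1 ℝ := (1 + A₀ᵀ * A₀)⁻¹ with hBdef
  set C : Matrix n2 n2 ℝ := 1 - A₀ * B * A₀ᵀ with hCdef
  set E : Matrix n1 n2 ℝ := B * A₀ᵀ with hEdef
  have hBsymm : Bᵀ = B := B_symm A₀
  have hCsymm : Cᵀ = C := by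
    rw [hCdef]
    rw [Matrix.transpose_sub, Matrix.transpose_one, Matrix.transpose_mul,
      Matrix.transpose_mul, Matrix.transpose_transpose, hBsymm, Matrix.mul_assoc]
  have hrw : (A₀ * B)ᵀ = Eᵀᵀ := by
    rw [Matrix.transpose_mul, hBsymm, Matrix.transpose_transpose, hEdef]
  rw [hrw, vec_identity B C E hBsymm hCsymm x]
  set X : Matrix n1 n2 ℝ := Matrix.of fun i j => x (i, j) with hXdef
  have hxX : vecNorm x = frob X := by
    have hfun : (fun p : n1 × n2 => X p.1 p.2) = x := by
      funext p
      exact congrArg x (Prod.mk.eta (p := p))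
    rw [frob, hfun]
  have hgoal : vecNorm (fun p : n1 × n2 => (B * X * C + E * Xᵀ * E) p.1 p.2)
      = frob (B * X * C + E * Xᵀ * E) := rfl
  rw [hgoal, hxX]
  set u : ℝ := 1 + s ^ 2 with hudef
  have hu : (0 : ℝ) < u := by positivity
  have he0 : (0 : ℝ) ≤ s / u := by positivity
  -- bounds on E and Eᵀ as operators
  have hEb : ∀ v : n2 → ℝ, vecNorm (E *ᵥ v) ≤ s / u * vecNorm v := by
    intro v
    have h := E_bound A₀ s hs0 hs1 hAb hATb v
    rw [hEdef, hBdef, div_mul_eq_mul_div, le_div_iff₀ hu, hudef]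
    linarith
  have hEtb : ∀ v : n1 → ℝ, vecNorm (Eᵀ *ᵥ v) ≤ s / u * vecNorm v := by
    intro v
    have hET : Eᵀ = A₀ * B := by
      rw [hEdef, Matrix.transpose_mul, hBsymm, Matrix.transpose_transpose]
    have h := ET_bound A₀ s hs0 hs1 hAb hATb v
    rw [hET, hBdef, div_mul_eq_mul_div, le_div_iff₀ hu, hudef]
    linarith
  -- lower bound: frob X ≤ u^2 * frob (B * X * C)
  have hXfact : (1 + A₀ᵀ * A₀) * (B * X * C) * (1 + A₀ * A₀ᵀ) = X := by
    have hCT : C * (1 + A₀ * A₀ᵀ) = 1 := C22_mul A₀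
    calc (1 + A₀ᵀ * A₀) * (B * X * C) * (1 + A₀ * A₀ᵀ)
        = ((1 + A₀ᵀ * A₀) * B) * (X * (C * (1 + A₀ * A₀ᵀ))) := by
          simp only [← Matrix.mul_assoc]
      _ = X := by rw [S_mul_inv, hCT, Matrix.one_mul, Matrix.mul_one]
  have hSb : ∀ v : n1 → ℝ, vecNorm ((1 + A₀ᵀ * A₀) *ᵥ v) ≤ u * vecNorm v :=
    S_mulVec_bound A₀ s hs0 hAb hATb
  have hTb : ∀ v : n2 → ℝ, vecNorm ((1 + A₀ * A₀ᵀ) *ᵥ v) ≤ u * vecNorm v := by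
    intro v
    have := S_mulVec_bound A₀ᵀ s hs0 hATb (by simpa using hAb) v
    simpa using this
  have hTsymm : (1 + A₀ * A₀ᵀ)ᵀ = 1 + A₀ * A₀ᵀ := by
    rw [Matrix.transpose_add, Matrix.transpose_one, Matrix.transpose_mul,
      Matrix.transpose_transpose]
  have hlow : frob X ≤ u ^ 2 * frob (B * X * C) := by
    conv_lhs => rw [← hXfact]
    calc frob ((1 + A₀ᵀ * A₀) * (B * X * C) * (1 + A₀ * A₀ᵀ))
        ≤ u * frob ((1 + A₀ᵀ * A₀) * (B * X * C)) := by
          apply frob_mul_le_right _ u (le_of_lt hu) _ _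
          intro v
          rw [hTsymm]
          exact hTb v
      _ ≤ u * (u * frob (B * X * C)) := by
          have := frob_mul_le_left (1 + A₀ᵀ * A₀) u (le_of_lt hu) hSb (B * X * C)
          nlinarith
      _ = u ^ 2 * frob (B * X * C) := by ring
  -- upper bound on the perturbation
  have hupper : frob (E * Xᵀ * E) ≤ s / u * (s / u * frob X) := by
    calc frob ((E * Xᵀ) * E) ≤ s / u * frob (E * Xᵀ) :=
          frob_mul_le_right E (s / u) he0 hEtb (E * Xᵀ)
      _ ≤ s / u * (s / u * frob Xᵀ) := by
          have := frob_mul_le_left E (s / u) he0 hEb Xᵀ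
          nlinarith
      _ = s / u * (s / u * frob X) := by rw [frob_transpose]
  have hupper2 : frob (E * Xᵀ * E) * u ^ 2 ≤ s ^ 2 * frob X := by
    calc frob (E * Xᵀ * E) * u ^ 2 ≤ (s / u * (s / u * frob X)) * u ^ 2 := by
          apply mul_le_mul_of_nonneg_right hupper (by positivity)
      _ = s ^ 2 * frob X := by field_simp
  -- reverse triangle inequality
  have htri : frob (B * X * C) ≤ frob (B * X * C + E * Xᵀ * E) + frob (E * Xᵀ * E) := by
    have hid : B * X * C = (B * X * C + E * Xᵀ * E) + -(E * Xᵀ * E) := by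
      rw [add_neg_cancel_right]
    calc frob (B * X * C)
        = frob ((B * X * C + E * Xᵀ * E) + -(E * Xᵀ * E)) := by rw [← hid]
      _ ≤ frob (B * X * C + E * Xᵀ * E) + frob (-(E * Xᵀ * E)) := frob_add_le_s11 _ _
      _ = frob (B * X * C + E * Xᵀ * E) + frob (E * Xᵀ * E) := by rw [frob_neg]
  -- final arithmetic
  have hu2 : (0 : ℝ) < u ^ 2 := by positivity
  rw [show (1 + s ^ 2) ^ 2 = u ^ 2 from by rw [hudef]]
  rw [div_mul_eq_mul_div, div_le_iff₀ hu2]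
  have htri2 : frob (B * X * C) * u ^ 2
      ≤ (frob (B * X * C + E * Xᵀ * E) + frob (E * Xᵀ * E)) * u ^ 2 :=
    mul_le_mul_of_nonneg_right htri (le_of_lt hu2)
  nlinarith [frob_nonneg (B * X * C + E * Xᵀ * E), frob_nonneg X,
    frob_nonneg (E * Xᵀ * E), frob_nonneg (B * X * C)]
end
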